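/- Bias of the VBE-II estimator: let $\pi$ induce a geometrically mixing state-action chain with constants $(C, \rho)$ and stationary state distribution bounded below by $\underline{\nu} > 0$, let $t_{\mathrm{mix}} = \lceil \log_\rho(\underline{\nu}/(2C)) \rceil$, and define the single-trajectory estimator $Q^{\pi,\xi,n}(s,a) = \frac{\mathbf{1}\{a = A_{\tau(s)}\}}{\pi(a|s)} \sum_{t=\tau(s)}^{n-1} \gamma^{t - \tau(s)} c(S_t, A_t)$ if the truncated state hitting time $\tau(s) \le n-1$, and $0$ otherwise. Then $\left\|\mathbb{E}_\xi[Q^{\pi,\xi,n}] - Q^\pi\right\|_\infty \le \frac{2(n+1)}{1-\gamma}\left[\gamma^{n-1} + \left(1 - \frac{\underline{\nu}}{2 t_{\mathrm{mix}}}\right)^{n-1}\right]$. -/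

import Mathlib

/-!
Let `h t` be the law of the first visit `τ` of the state chain to `s` and `r = P(τ ≥ n)`.
For each `t < n` the estimator's mean collects the first `n - t` discounted costs of the chain
restarted at `(s, a)`, so it falls short of `Q^π(s, a)` by at most
`(∑ₜ h t γ^(n-t) + r) / (1 - γ)`. Mixing puts mass `≥ ν/2` on `s` after `t_mix` steps from
every state, so by the strong Markov property `P(τ ≥ t) ≤ 2 β^t` with `β = 1 - ν/(2 t_mix)`,
and each of the `n + 1` terms `β^t γ^(n-t)` is at most `γ^(n-1) + β^(n-1)`.
-/

open Finset

/-- `t`-step transition probabilities of a finite Markov chain with kernel `K`. -/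
noncomputable def kpow {Z : Type*} [Fintype Z] [DecidableEq Z]
    (K : Z → Z → ℝ) : ℕ → Z → Z → ℝ
  | 0, z0, z' => if z0 = z' then 1 else 0
  | t + 1, z0, z' => ∑ u, K z0 u * kpow K t u z'

/-- `hitProb K z i z0` is the probability that the chain started at `z0` visits `z`
for the first time at time `i`. -/
noncomputable def hitProb {Z : Type*} [Fintype Z] [DecidableEq Z]
    (K : Z → Z → ℝ) (z : Z) : ℕ → Z → ℝ
  | 0, z0 => if z0 = z then 1 else 0
  | i + 1, z0 => if z0 = z then 0 else ∑ u, K z0 u * hitProb K z i u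

/-- `avoidProb P s t z` is the probability that the chain started at `z` stays off `s` at the
times `0, …, t - 1`. -/
noncomputable def avoidProb {Z : Type*} [Fintype Z] [DecidableEq Z]
    (P : Z → Z → ℝ) (s : Z) : ℕ → Z → ℝ
  | 0, _ => 1
  | t + 1, z => if z = s then 0 else ∑ u, P z u * avoidProb P s t u

section StochasticMatrix

variable {Z : Type*} [Fintype Z] [DecidableEq Z] {P : Matrix Z Z ℝ} {s : Z}

theorem kpow_succ (t : ℕ) (x y : Z) : kpow P (t + 1) x y = ∑ u, P x u * kpow P t u y := rfl

theorem hitProb_succ (t : ℕ) (z : Z) :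
    hitProb P s (t + 1) z = if z = s then 0 else ∑ u, P z u * hitProb P s t u := rfl

theorem avoidProb_zero (z : Z) : avoidProb P s 0 z = 1 := rfl

theorem avoidProb_succ (t : ℕ) (z : Z) :
    avoidProb P s (t + 1) z = if z = s then 0 else ∑ u, P z u * avoidProb P s t u := rfl

theorem kpow_eq_pow (P : Matrix Z Z ℝ) (t : ℕ) : kpow P t = P ^ t := by
  induction t with
  | zero => ext x y; simp [kpow, Matrix.one_apply]
  | succ t ih => ext x y; rw [pow_succ', Matrix.mul_apply, kpow_succ, ih]

theorem kpow_nonneg (hP : P ∈ Matrix.rowStochastic ℝ Z) (t : ℕ) (x y : Z) :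
    0 ≤ kpow P t x y := by
  rw [kpow_eq_pow]
  exact Matrix.nonneg_of_mem_rowStochastic (pow_mem hP t)

theorem sum_kpow (hP : P ∈ Matrix.rowStochastic ℝ Z) (t : ℕ) (x : Z) :
    ∑ y, kpow P t x y = 1 := by
  rw [kpow_eq_pow]
  exact Matrix.sum_row_of_mem_rowStochastic (pow_mem hP t) x

theorem kpow_le_one (hP : P ∈ Matrix.rowStochastic ℝ Z) (t : ℕ) (x y : Z) :
    kpow P t x y ≤ 1 := by
  rw [kpow_eq_pow]
  exact Matrix.le_one_of_mem_rowStochastic (pow_mem hP t)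

theorem sum_kpow_mul_nonneg (hP : P ∈ Matrix.rowStochastic ℝ Z) {f : Z → ℝ}
    (hf : ∀ z, 0 ≤ f z) (t : ℕ) (x : Z) : 0 ≤ ∑ y, kpow P t x y * f y :=
  sum_nonneg fun y _ => mul_nonneg (kpow_nonneg hP t x y) (hf y)

theorem sum_kpow_mul_le_one (hP : P ∈ Matrix.rowStochastic ℝ Z) {f : Z → ℝ}
    (hf : ∀ z, f z ≤ 1) (t : ℕ) (x : Z) : ∑ y, kpow P t x y * f y ≤ 1 :=
  calc ∑ y, kpow P t x y * f y ≤ ∑ y, kpow P t x y :=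
        sum_le_sum fun y _ => mul_le_of_le_one_right (kpow_nonneg hP t x y) (hf y)
    _ = 1 := sum_kpow hP t x

theorem avoidProb_nonneg (hP : P ∈ Matrix.rowStochastic ℝ Z) (t : ℕ) (z : Z) :
    0 ≤ avoidProb P s t z := by
  induction t generalizing z with
  | zero => exact zero_le_one
  | succ t ih =>
    rw [avoidProb_succ]
    split_ifs
    · rfl
    · exact sum_nonneg fun u _ => mul_nonneg (Matrix.nonneg_of_mem_rowStochastic hP) (ih u)

theorem avoidProb_le_one (hP : P ∈ Matrix.rowStochastic ℝ Z) (t : ℕ) (z : Z) :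
    avoidProb P s t z ≤ 1 := by
  induction t generalizing z with
  | zero => rfl
  | succ t ih =>
    rw [avoidProb_succ]
    split_ifs
    · exact zero_le_one
    · calc ∑ u, P z u * avoidProb P s t u ≤ ∑ u, P z u :=
            sum_le_sum fun u _ =>
              mul_le_of_le_one_right (Matrix.nonneg_of_mem_rowStochastic hP) (ih u)
        _ = 1 := Matrix.sum_row_of_mem_rowStochastic hP z

theorem avoidProb_succ_le (hP : P ∈ Matrix.rowStochastic ℝ Z) (t : ℕ) (z : Z) :
    avoidProb P s (t + 1) z ≤ avoidProb P s t z := by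
  induction t generalizing z with
  | zero => exact avoidProb_le_one hP 1 z
  | succ t ih =>
    rw [avoidProb_succ, avoidProb_succ]
    split_ifs
    · rfl
    · exact sum_le_sum fun u _ =>
        mul_le_mul_of_nonneg_left (ih u) (Matrix.nonneg_of_mem_rowStochastic hP)

theorem avoidProb_antitone (hP : P ∈ Matrix.rowStochastic ℝ Z) (z : Z) :
    Antitone fun t => avoidProb P s t z :=
  antitone_nat_of_succ_le fun t => avoidProb_succ_le hP t z

theorem hitProb_eq_avoidProb_sub (hP : P ∈ Matrix.rowStochastic ℝ Z) (t : ℕ) (z : Z) :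
    hitProb P s t z = avoidProb P s t z - avoidProb P s (t + 1) z := by
  induction t generalizing z with
  | zero =>
    simp only [hitProb, avoidProb, mul_one, Matrix.sum_row_of_mem_rowStochastic hP]
    split_ifs <;> norm_num
  | succ t ih =>
    rw [hitProb_succ, avoidProb_succ, avoidProb_succ]
    split_ifs
    · ring
    · simp only [ih, mul_sub, sum_sub_distrib]

theorem hitProb_nonneg (hP : P ∈ Matrix.rowStochastic ℝ Z) (t : ℕ) (z : Z) :
    0 ≤ hitProb P s t z := by
  rw [hitProb_eq_avoidProb_sub hP]
  exact sub_nonneg.2 (avoidProb_succ_le hP t z)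

theorem hitProb_le_avoidProb (hP : P ∈ Matrix.rowStochastic ℝ Z) (t : ℕ) (z : Z) :
    hitProb P s t z ≤ avoidProb P s t z := by
  rw [hitProb_eq_avoidProb_sub hP]
  exact sub_le_self _ (avoidProb_nonneg hP _ z)

theorem sum_range_hitProb (hP : P ∈ Matrix.rowStochastic ℝ Z) (n : ℕ) (z : Z) :
    ∑ t ∈ range n, hitProb P s t z = 1 - avoidProb P s n z := by
  rw [sum_congr rfl fun t _ => hitProb_eq_avoidProb_sub hP t z, sum_range_sub', avoidProb_zero]

theorem avoidProb_succ_le_one_sub_kpow (hP : P ∈ Matrix.rowStochastic ℝ Z) (t : ℕ) (z : Z) :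
    avoidProb P s (t + 1) z ≤ 1 - kpow P t z s := by
  induction t generalizing z with
  | zero =>
    simp only [avoidProb, kpow, mul_one, Matrix.sum_row_of_mem_rowStochastic hP]
    split_ifs <;> norm_num
  | succ t ih =>
    rw [avoidProb_succ]
    split_ifs
    · exact sub_nonneg.2 (kpow_le_one hP _ z s)
    · calc ∑ u, P z u * avoidProb P s (t + 1) u ≤ ∑ u, P z u * (1 - kpow P t u s) :=
            sum_le_sum fun u _ =>
              mul_le_mul_of_nonneg_left (ih u) (Matrix.nonneg_of_mem_rowStochastic hP)
        _ = 1 - kpow P (t + 1) z s := by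
          simp only [mul_sub, mul_one, sum_sub_distrib, Matrix.sum_row_of_mem_rowStochastic hP,
            kpow_succ]

theorem avoidProb_add_le_mul (hP : P ∈ Matrix.rowStochastic ℝ Z) {b : ℕ} {q : ℝ}
    (hq : ∀ u, avoidProb P s (b + 1) u ≤ q) (a : ℕ) (z : Z) :
    avoidProb P s (a + 1 + b) z ≤ avoidProb P s (a + 1) z * q := by
  induction a generalizing z with
  | zero =>
    have h1 : avoidProb P s 1 z = if z = s then 0 else 1 := by
      simp only [avoidProb_succ, avoidProb_zero, mul_one, Matrix.sum_row_of_mem_rowStochastic hP]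
    rw [zero_add, add_comm, h1]
    split_ifs with hz
    · rw [avoidProb_succ, if_pos hz, zero_mul]
    · rw [one_mul]
      exact hq z
  | succ a ih =>
    rw [show a + 1 + 1 + b = a + 1 + b + 1 by ring, avoidProb_succ, avoidProb_succ]
    split_ifs
    · rw [zero_mul]
    · rw [sum_mul]
      exact sum_le_sum fun u _ => by
        rw [mul_assoc]
        exact mul_le_mul_of_nonneg_left (ih u) (Matrix.nonneg_of_mem_rowStochastic hP)

theorem avoidProb_mul_add_one_le_pow (hP : P ∈ Matrix.rowStochastic ℝ Z) {b : ℕ} {q : ℝ}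
    (hq : ∀ u, avoidProb P s (b + 1) u ≤ q) (k : ℕ) (z : Z) :
    avoidProb P s (k * b + 1) z ≤ q ^ k := by
  induction k generalizing z with
  | zero => simpa using avoidProb_le_one hP 1 z
  | succ k ih =>
    calc avoidProb P s ((k + 1) * b + 1) z = avoidProb P s (k * b + 1 + b) z := by
          rw [show (k + 1) * b + 1 = k * b + 1 + b by ring]
      _ ≤ avoidProb P s (k * b + 1) z * q := avoidProb_add_le_mul hP hq _ z
      _ ≤ q ^ k * q :=
          mul_le_mul_of_nonneg_right (ih z) ((avoidProb_nonneg hP _ z).trans (hq z))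
      _ = q ^ (k + 1) := (pow_succ q k).symm

theorem avoidProb_le_two_mul_pow (hP : P ∈ Matrix.rowStochastic ℝ Z) {b : ℕ} (hb : 0 < b)
    {β : ℝ} (hβ0 : 0 ≤ β) (hβ1 : β ≤ 1) (hhalf : 1 / 2 ≤ β ^ b)
    (hblock : ∀ u, avoidProb P s (b + 1) u ≤ β ^ b) (t : ℕ) (z : Z) :
    avoidProb P s t z ≤ 2 * β ^ t := by
  rcases t with _ | r
  · rw [avoidProb_zero, pow_zero]
    norm_num
  have hr : b * (r / b) + (r % b + 1) = r + 1 := by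
    have := Nat.div_add_mod r b
    omega
  have hrem : 1 ≤ 2 * β ^ (r % b + 1) := by
    have : β ^ b ≤ β ^ (r % b + 1) := pow_le_pow_of_le_one hβ0 hβ1 (Nat.mod_lt r hb)
    linarith
  calc avoidProb P s (r + 1) z ≤ avoidProb P s (r / b * b + 1) z :=
        avoidProb_antitone hP z (by have := Nat.div_mul_le_self r b; omega)
    _ ≤ (β ^ b) ^ (r / b) := avoidProb_mul_add_one_le_pow hP hblock _ z
    _ ≤ β ^ (b * (r / b)) * (2 * β ^ (r % b + 1)) := by
        rw [← pow_mul]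
        exact le_mul_of_one_le_right (by positivity) hrem
    _ = 2 * β ^ (r + 1) := by rw [← hr, pow_add]; ring

theorem one_sub_div_two_mul_mem_Icc {ν : ℝ} (hν0 : 0 ≤ ν) (hν1 : ν ≤ 1) (b : ℕ) :
    1 - ν / (2 * b) ∈ Set.Icc (0 : ℝ) 1 := by
  rcases Nat.eq_zero_or_pos b with rfl | hb
  · simp
  have h2b : (1 : ℝ) ≤ 2 * b := by
    have : (1 : ℝ) ≤ b := Nat.one_le_cast.2 hb
    linarith
  have := div_le_self hν0 h2b
  have := div_nonneg hν0 (zero_le_one.trans h2b)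
  constructor <;> linarith

/-- For `b = 0` the rate is `1 - ν / 0 = 1` and the bound is trivial. -/
theorem avoidProb_le_of_le_kpow (hP : P ∈ Matrix.rowStochastic ℝ Z) {b : ℕ} {ν : ℝ}
    (hν0 : 0 ≤ ν) (hν1 : ν ≤ 1) (hlow : ∀ u, ν / 2 ≤ kpow P b u s) (t : ℕ) (z : Z) :
    avoidProb P s t z ≤ 2 * (1 - ν / (2 * b)) ^ t := by
  rcases Nat.eq_zero_or_pos b with rfl | hb
  · simp only [Nat.cast_zero, mul_zero, div_zero, sub_zero, one_pow, mul_one]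
    linarith [avoidProb_le_one hP t z (s := s)]
  obtain ⟨hβ0, hβ1⟩ := one_sub_div_two_mul_mem_Icc hν0 hν1 b
  have hbern : 1 - ν / 2 ≤ (1 - ν / (2 * b)) ^ b := by
    have h := one_add_mul_le_pow (a := -(ν / (2 * b))) (by linarith) b
    have hb0 : (b : ℝ) ≠ 0 := by positivity
    rwa [show 1 + (b : ℝ) * -(ν / (2 * b)) = 1 - ν / 2 by field_simp; ring, ← sub_eq_add_neg] at h
  refine avoidProb_le_two_mul_pow hP hb hβ0 hβ1 (by linarith) (fun u => ?_) t z
  exact (avoidProb_succ_le_one_sub_kpow hP b u).trans (by linarith [hlow u])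

theorem pow_mul_pow_sub_le {β γ : ℝ} (hβ0 : 0 ≤ β) (hβ1 : β ≤ 1) (hγ0 : 0 ≤ γ) (hγ1 : γ ≤ 1)
    {t n : ℕ} (ht : t ≤ n) : β ^ t * γ ^ (n - t) ≤ γ ^ (n - 1) + β ^ (n - 1) := by
  calc β ^ t * γ ^ (n - t) ≤ max β γ ^ t * max β γ ^ (n - t) := by
        gcongr
        exacts [le_max_left _ _, le_max_right _ _]
    _ = max β γ ^ n := by rw [← pow_add, Nat.add_sub_cancel' ht]
    _ ≤ max β γ ^ (n - 1) :=
        pow_le_pow_of_le_one (le_max_of_le_left hβ0) (max_le hβ1 hγ1) (Nat.sub_le n 1)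
    _ ≤ γ ^ (n - 1) + β ^ (n - 1) := by
        rcases max_choice β γ with h | h <;> rw [h]
        · exact le_add_of_nonneg_left (pow_nonneg hγ0 _)
        · exact le_add_of_nonneg_right (pow_nonneg hβ0 _)

theorem sum_hitProb_mul_pow_add_avoidProb_le (hP : P ∈ Matrix.rowStochastic ℝ Z) {β γ : ℝ}
    (hβ0 : 0 ≤ β) (hβ1 : β ≤ 1) (hγ0 : 0 ≤ γ) (hγ1 : γ ≤ 1) {z : Z}
    (havoid : ∀ t, avoidProb P s t z ≤ 2 * β ^ t) (n : ℕ) :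
    ∑ t ∈ range n, hitProb P s t z * γ ^ (n - t) + avoidProb P s n z
      ≤ 2 * (n + 1) * (γ ^ (n - 1) + β ^ (n - 1)) := by
  calc _ ≤ ∑ t ∈ range (n + 1), 2 * (β ^ t * γ ^ (n - t)) := by
        rw [sum_range_succ, Nat.sub_self, pow_zero, mul_one]
        refine add_le_add (sum_le_sum fun t _ => ?_) (havoid n)
        rw [← mul_assoc]
        exact mul_le_mul_of_nonneg_right ((hitProb_le_avoidProb hP t z).trans (havoid t))
          (pow_nonneg hγ0 _)
    _ ≤ ∑ t ∈ range (n + 1), 2 * (γ ^ (n - 1) + β ^ (n - 1)) := by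
        gcongr with t ht
        exact pow_mul_pow_sub_le hβ0 hβ1 hγ0 hγ1 (Nat.lt_succ_iff.1 (mem_range.1 ht))
    _ = _ := by
        rw [sum_const, card_range, nsmul_eq_mul]
        push_cast
        ring

end StochasticMatrix

theorem le_one_of_le_sum_fiber {S A : Type*} [Fintype S] [Fintype A] {σ : S × A → ℝ} {ν : ℝ}
    (hσ0 : ∀ z, 0 ≤ σ z) (hσ1 : ∑ z, σ z = 1) (s : S) (hν : ν ≤ ∑ a, σ (s, a)) : ν ≤ 1 := by
  refine hν.trans ?_
  rw [← hσ1, Fintype.sum_prod_type]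
  exact single_le_sum (f := fun s' => ∑ a, σ (s', a))
    (fun s' _ => sum_nonneg fun a _ => hσ0 (s', a)) (mem_univ s)

section StateActionChain

variable {S A : Type*} [Fintype S] [Fintype A] [DecidableEq S]
  {Pk : S → A → S → ℝ} {π : S → A → ℝ} {Pst : Matrix S S ℝ}

theorem stateAction_mem_rowStochastic [DecidableEq A] {K : Matrix (S × A) (S × A) ℝ}
    (hP0 : ∀ s a s', 0 ≤ Pk s a s') (hP1 : ∀ s a, ∑ s', Pk s a s' = 1)
    (hπ0 : ∀ s a, 0 ≤ π s a) (hπ1 : ∀ s, ∑ a, π s a = 1)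
    (hK : ∀ z w, K z w = Pk z.1 z.2 w.1 * π w.1 w.2) : K ∈ Matrix.rowStochastic ℝ (S × A) := by
  refine Matrix.mem_rowStochastic_iff_sum.2 ⟨fun z w => ?_, fun z => ?_⟩
  · rw [hK]
    exact mul_nonneg (hP0 _ _ _) (hπ0 _ _)
  · simp only [hK, Fintype.sum_prod_type, ← mul_sum, hπ1, mul_one, hP1]

theorem state_mem_rowStochastic (hP0 : ∀ s a s', 0 ≤ Pk s a s')
    (hP1 : ∀ s a, ∑ s', Pk s a s' = 1) (hπ0 : ∀ s a, 0 ≤ π s a) (hπ1 : ∀ s, ∑ a, π s a = 1)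
    (hPst : ∀ s s', Pst s s' = ∑ a, π s a * Pk s a s') : Pst ∈ Matrix.rowStochastic ℝ S := by
  refine Matrix.mem_rowStochastic_iff_sum.2 ⟨fun s s' => ?_, fun s => ?_⟩
  · rw [hPst]
    exact sum_nonneg fun a _ => mul_nonneg (hπ0 _ _) (hP0 _ _ _)
  · simp only [hPst]
    rw [sum_comm]
    simp only [← mul_sum, hP1, mul_one, hπ1]

theorem sum_kpow_succ_stateAction [DecidableEq A] {K : Matrix (S × A) (S × A) ℝ}
    (hK : ∀ z w, K z w = Pk z.1 z.2 w.1 * π w.1 w.2) (t : ℕ)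
    (s₁ : S) (a₀ : A) (s₂ : S) :
    ∑ a, kpow K (t + 1) (s₁, a₀) (s₂, a)
      = ∑ u, Pk s₁ a₀ u * ∑ b, π u b * ∑ a, kpow K t (u, b) (s₂, a) := by
  simp only [kpow_succ, hK, Fintype.sum_prod_type, mul_sum]
  rw [sum_comm]
  refine sum_congr rfl fun u _ => ?_
  rw [sum_comm]
  simp only [mul_assoc]

theorem kpow_state_eq_sum_kpow_stateAction [DecidableEq A] {K : Matrix (S × A) (S × A) ℝ}
    (hπ1 : ∀ s, ∑ a, π s a = 1)
    (hK : ∀ z w, K z w = Pk z.1 z.2 w.1 * π w.1 w.2)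
    (hPst : ∀ s s', Pst s s' = ∑ a, π s a * Pk s a s') (t : ℕ) (s₁ s₂ : S) :
    kpow Pst t s₁ s₂ = ∑ a₀, π s₁ a₀ * ∑ a, kpow K t (s₁, a₀) (s₂, a) := by
  induction t generalizing s₁ with
  | zero => by_cases h : s₁ = s₂ <;> simp [kpow, h, hπ1]
  | succ t ih =>
    calc kpow Pst (t + 1) s₁ s₂ = ∑ u, (∑ a₀, π s₁ a₀ * Pk s₁ a₀ u) * kpow Pst t u s₂ := by
          simp only [kpow_succ, hPst]
      _ = ∑ a₀, π s₁ a₀ * ∑ u, Pk s₁ a₀ u * kpow Pst t u s₂ := by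
          simp only [sum_mul, mul_sum, mul_assoc]
          exact sum_comm
      _ = _ := by simp only [sum_kpow_succ_stateAction hK, ih]

theorem sub_le_kpow_state_of_mixing [DecidableEq A] {K : Matrix (S × A) (S × A) ℝ}
    (hπ0 : ∀ s a, 0 ≤ π s a) (hπ1 : ∀ s, ∑ a, π s a = 1)
    (hK : ∀ z w, K z w = Pk z.1 z.2 w.1 * π w.1 w.2)
    (hPst : ∀ s s', Pst s s' = ∑ a, π s a * Pk s a s') {σ : S × A → ℝ} {C ρ ν : ℝ}
    (hmix : ∀ (t : ℕ) (z₀ : S × A), ∑ z, |kpow K t z₀ z - σ z| ≤ C * ρ ^ t)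
    (hνlb : ∀ s, ν ≤ ∑ a, σ (s, a)) (t : ℕ) (s₀ s : S) :
    ν - C * ρ ^ t ≤ kpow Pst t s₀ s := by
  have hfiber (z₀ : S × A) : ν - C * ρ ^ t ≤ ∑ a, kpow K t z₀ (s, a) := by
    have hdist : ∑ a, σ (s, a) - ∑ a, kpow K t z₀ (s, a) ≤ ∑ z, |kpow K t z₀ z - σ z| :=
      calc ∑ a, σ (s, a) - ∑ a, kpow K t z₀ (s, a)
          ≤ ∑ a, |kpow K t z₀ (s, a) - σ (s, a)| := by
            rw [← sum_sub_distrib]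
            exact sum_le_sum fun a _ => (le_abs_self _).trans_eq (abs_sub_comm _ _)
        _ ≤ ∑ z, |kpow K t z₀ z - σ z| := by
            rw [Fintype.sum_prod_type]
            exact single_le_sum (f := fun s' => ∑ a, |kpow K t z₀ (s', a) - σ (s', a)|)
              (fun _ _ => sum_nonneg fun _ _ => abs_nonneg _) (mem_univ s)
    linarith [hνlb s, hmix t z₀]
  rw [kpow_state_eq_sum_kpow_stateAction hπ1 hK hPst]
  calc ν - C * ρ ^ t = ∑ a₀, π s₀ a₀ * (ν - C * ρ ^ t) := by rw [← sum_mul, hπ1, one_mul]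
    _ ≤ _ := sum_le_sum fun a₀ _ => mul_le_mul_of_nonneg_left (hfiber _) (hπ0 _ _)

end StateActionChain

theorem pow_natCeil_log_div_log_le {ρ x : ℝ} (hρ0 : 0 < ρ) (hρ1 : ρ < 1) (hx : 0 < x) :
    ρ ^ ⌈Real.log x / Real.log ρ⌉₊ ≤ x := by
  rw [Real.pow_le_iff_le_log hρ0 hx, ← div_le_iff_of_neg (Real.log_neg hρ0 hρ1)]
  exact Nat.le_ceil _

section DiscountedSum

variable {γ : ℝ} {g : ℕ → ℝ}

theorem summable_pow_mul (hγ0 : 0 ≤ γ) (hγ1 : γ < 1) (hg0 : ∀ j, 0 ≤ g j)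
    (hg1 : ∀ j, g j ≤ 1) : Summable fun j => γ ^ j * g j :=
  (summable_geometric_of_lt_one hγ0 hγ1).of_nonneg_of_le
    (fun j => mul_nonneg (pow_nonneg hγ0 j) (hg0 j))
    fun j => mul_le_of_le_one_right (pow_nonneg hγ0 j) (hg1 j)

theorem tsum_sub_sum_range_pow_mul_le (hγ0 : 0 ≤ γ) (hγ1 : γ < 1) (hg0 : ∀ j, 0 ≤ g j)
    (hg1 : ∀ j, g j ≤ 1) (m : ℕ) :
    ∑' j, γ ^ j * g j - ∑ j ∈ range m, γ ^ j * g j ≤ γ ^ m / (1 - γ) := by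
  have hsum := summable_pow_mul hγ0 hγ1 hg0 hg1
  have hle (i : ℕ) : γ ^ (i + m) * g (i + m) ≤ γ ^ m * γ ^ i := by
    rw [pow_add, mul_comm (γ ^ i)]
    exact mul_le_of_le_one_right (by positivity) (hg1 _)
  rw [← hsum.sum_add_tsum_nat_add m, add_sub_cancel_left]
  calc ∑' i, γ ^ (i + m) * g (i + m) ≤ ∑' i, γ ^ m * γ ^ i :=
        (hsum.comp_injective (add_left_injective m)).tsum_le_tsum hle
          ((summable_geometric_of_lt_one hγ0 hγ1).mul_left _)
    _ = γ ^ m / (1 - γ) := by rw [tsum_mul_left, tsum_geometric_of_lt_one hγ0 hγ1, div_eq_mul_inv]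

theorem abs_sum_mul_sum_range_sub_tsum_le (hγ0 : 0 ≤ γ) (hγ1 : γ < 1) (hg0 : ∀ j, 0 ≤ g j)
    (hg1 : ∀ j, g j ≤ 1) {h : ℕ → ℝ} {r : ℝ} (hh : ∀ t, 0 ≤ h t) (hr : 0 ≤ r) {n : ℕ}
    (hsum : ∑ t ∈ range n, h t = 1 - r) :
    |∑ t ∈ range n, h t * ∑ j ∈ range (n - t), γ ^ j * g j - ∑' j, γ ^ j * g j|
      ≤ (∑ t ∈ range n, h t * γ ^ (n - t) + r) / (1 - γ) := by
  set Q := ∑' j, γ ^ j * g j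
  have htail0 (m : ℕ) : 0 ≤ Q - ∑ j ∈ range m, γ ^ j * g j :=
    sub_nonneg.2 <| (summable_pow_mul hγ0 hγ1 hg0 hg1).sum_le_tsum _
      fun j _ => mul_nonneg (pow_nonneg hγ0 j) (hg0 j)
  have hQ0 : 0 ≤ Q := by simpa using htail0 0
  have hQ1 : Q ≤ 1 / (1 - γ) := by simpa using tsum_sub_sum_range_pow_mul_le hγ0 hγ1 hg0 hg1 0
  have hdecomp : Q - ∑ t ∈ range n, h t * ∑ j ∈ range (n - t), γ ^ j * g j
      = ∑ t ∈ range n, h t * (Q - ∑ j ∈ range (n - t), γ ^ j * g j) + r * Q := by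
    rw [sum_congr rfl fun t _ => mul_sub (h t) _ _, sum_sub_distrib, ← sum_mul, hsum]
    ring
  rw [abs_sub_comm, abs_of_nonneg (hdecomp ▸ add_nonneg
    (sum_nonneg fun t _ => mul_nonneg (hh t) (htail0 _)) (mul_nonneg hr hQ0)), hdecomp,
    add_div, sum_div]
  gcongr with t
  · rw [mul_div_assoc]
    exact mul_le_mul_of_nonneg_left (tsum_sub_sum_range_pow_mul_le hγ0 hγ1 hg0 hg1 _) (hh t)
  · calc r * Q ≤ r * (1 / (1 - γ)) := mul_le_mul_of_nonneg_left hQ1 hr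
      _ = r / (1 - γ) := mul_one_div r _

end DiscountedSum

theorem vbe2_bias_bound_general {S A : Type*} [Fintype S] [Fintype A]
    [DecidableEq S] [DecidableEq A]
    (Pk : S → A → S → ℝ) (c : S → A → ℝ) (π : S → A → ℝ) (γ C ρ ν : ℝ)
    (hP0 : ∀ s a s', 0 ≤ Pk s a s') (hP1 : ∀ s a, ∑ s', Pk s a s' = 1)
    (hπ0 : ∀ s a, 0 ≤ π s a) (hπ1 : ∀ s, ∑ a, π s a = 1)
    (hc0 : ∀ s a, 0 ≤ c s a) (hc1 : ∀ s a, c s a ≤ 1)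
    (hγ0 : 0 < γ) (hγ1 : γ < 1)
    (hC : 0 < C) (hρ0 : 0 < ρ) (hρ1 : ρ < 1) (hν : 0 < ν)
    (K : S × A → S × A → ℝ)
    (hK : ∀ z w, K z w = Pk z.1 z.2 w.1 * π w.1 w.2)
    (Pst : S → S → ℝ)
    (hPst : ∀ s s', Pst s s' = ∑ a, π s a * Pk s a s')
    (σ : S × A → ℝ)
    (hσ0 : ∀ z, 0 ≤ σ z) (hσ1 : ∑ z, σ z = 1)
    (hmix : ∀ (t : ℕ) (z0 : S × A), ∑ z', |kpow K t z0 z' - σ z'| ≤ C * ρ ^ t)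
    (hνlb : ∀ s : S, ν ≤ ∑ a, σ (s, a))
    (Qpi : S × A → ℝ)
    (hQ : ∀ z, Qpi z = ∑' t : ℕ, γ ^ t * ∑ w, kpow K t z w * c w.1 w.2)
    (tmix : ℕ) (htmix : tmix = ⌈Real.log (ν / (2 * C)) / Real.log ρ⌉₊)
    (n : ℕ) :
    ∀ (s : S) (a : A) (s0 : S),
      |(∑ t ∈ Finset.range n, hitProb Pst s t s0 *
          ∑ j ∈ Finset.range (n - t), γ ^ j * ∑ w, kpow K j (s, a) w * c w.1 w.2)
          - Qpi (s, a)|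
        ≤ 2 * (n + 1) / (1 - γ) *
          (γ ^ (n - 1) + (1 - ν / (2 * tmix)) ^ (n - 1)) := by
  intro s a s0
  have hKs := stateAction_mem_rowStochastic hP0 hP1 hπ0 hπ1 hK
  have hPs := state_mem_rowStochastic hP0 hP1 hπ0 hπ1 hPst
  have hν1 := le_one_of_le_sum_fiber hσ0 hσ1 s (hνlb s)
  have hCρ : C * ρ ^ tmix ≤ ν / 2 := by
    calc C * ρ ^ tmix ≤ C * (ν / (2 * C)) :=
          mul_le_mul_of_nonneg_left (htmix ▸ pow_natCeil_log_div_log_le hρ0 hρ1 (by positivity))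
            hC.le
      _ = ν / 2 := by field_simp
  have havoid (t : ℕ) : avoidProb Pst s t s0 ≤ 2 * (1 - ν / (2 * tmix)) ^ t :=
    avoidProb_le_of_le_kpow hPs hν.le hν1 (fun u => by
      linarith [sub_le_kpow_state_of_mixing hπ0 hπ1 hK hPst hmix hνlb tmix u s]) t s0
  obtain ⟨hβ0, hβ1⟩ := one_sub_div_two_mul_mem_Icc hν.le hν1 tmix
  rw [hQ]
  calc _ ≤ (∑ t ∈ range n, hitProb Pst s t s0 * γ ^ (n - t) + avoidProb Pst s n s0) / (1 - γ) :=
        abs_sum_mul_sum_range_sub_tsum_le hγ0.le hγ1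
          (sum_kpow_mul_nonneg hKs (fun w => hc0 w.1 w.2) · _)
          (sum_kpow_mul_le_one hKs (fun w => hc1 w.1 w.2) · _)
          (hitProb_nonneg hPs · s0) (avoidProb_nonneg hPs n s0) (sum_range_hitProb hPs n s0)
    _ ≤ 2 * (n + 1) * (γ ^ (n - 1) + (1 - ν / (2 * tmix)) ^ (n - 1)) / (1 - γ) :=
        div_le_div_of_nonneg_right
          (sum_hitProb_mul_pow_add_avoidProb_le hPs hβ0 hβ1 hγ0.le hγ1.le havoid n)
          (sub_nonneg.2 hγ1.le)
    _ = _ := by ring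

/-- bias of the single-trajectory VBE-II estimator.  The expectation of
the estimator, computed via the strong Markov property at the truncated first hitting
time of the state `s` (the importance weight `1{a = A_{τ(s)}}/π(a|s)` exactly cancels
the probability of the action at the hitting time), deviates from `Q^π(s,a)` by at most
`2(n+1)/(1-γ) * (γ^(n-1) + (1 - ν/(2 t_mix))^(n-1))`, uniformly over `(s,a)` and the
initial state. -/
theorem vbe2_bias_bound {S A : Type*} [Fintype S] [Fintype A]
    [DecidableEq S] [DecidableEq A]
    (Pk : S → A → S → ℝ) (c : S → A → ℝ) (π : S → A → ℝ) (γ C ρ ν : ℝ)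
    (hP0 : ∀ s a s', 0 ≤ Pk s a s') (hP1 : ∀ s a, ∑ s', Pk s a s' = 1)
    (hπ0 : ∀ s a, 0 ≤ π s a) (hπ1 : ∀ s, ∑ a, π s a = 1)
    (hc0 : ∀ s a, 0 ≤ c s a) (hc1 : ∀ s a, c s a ≤ 1)
    (hγ0 : 0 < γ) (hγ1 : γ < 1)
    (hC : 0 < C) (hρ0 : 0 < ρ) (hρ1 : ρ < 1) (hν : 0 < ν)
    (K : S × A → S × A → ℝ)
    (hK : ∀ z w, K z w = Pk z.1 z.2 w.1 * π w.1 w.2)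
    (Pst : S → S → ℝ)
    (hPst : ∀ s s', Pst s s' = ∑ a, π s a * Pk s a s')
    (σ : S × A → ℝ)
    (hσ0 : ∀ z, 0 ≤ σ z) (hσ1 : ∑ z, σ z = 1)
    (hstat : ∀ z', ∑ z, σ z * K z z' = σ z')
    (hmix : ∀ (t : ℕ) (z0 : S × A), ∑ z', |kpow K t z0 z' - σ z'| ≤ C * ρ ^ t)
    (hνlb : ∀ s : S, ν ≤ ∑ a, σ (s, a))
    (Qpi : S × A → ℝ)
    (hQ : ∀ z, Qpi z = ∑' t : ℕ, γ ^ t * ∑ w, kpow K t z w * c w.1 w.2)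
    (tmix : ℕ) (htmix : tmix = ⌈Real.log (ν / (2 * C)) / Real.log ρ⌉₊)
    (n : ℕ) (hn : 1 ≤ n) :
    ∀ (s : S) (a : A) (s0 : S),
      |(∑ t ∈ Finset.range n, hitProb Pst s t s0 *
          ∑ j ∈ Finset.range (n - t), γ ^ j * ∑ w, kpow K j (s, a) w * c w.1 w.2)
          - Qpi (s, a)|
        ≤ 2 * (n + 1) / (1 - γ) *
          (γ ^ (n - 1) + (1 - ν / (2 * tmix)) ^ (n - 1)) :=
  vbe2_bias_bound_general Pk c π γ C ρ ν hP0 hP1 hπ0 hπ1 hc0 hc1 hγ0 hγ1 hC hρ0 hρ1 hν K hK Pst hPst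
    σ hσ0 hσ1 hmix hνlb Qpi hQ tmix htmix n
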